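/- arXiv:1902.07773 — 2 statements merged into one kernel-verified Lean document; each statement's English description precedes it below -/
import Mathlib

section
/- If for each degree of freedom σ in a simplex K the coefficients satisfy E_σ - m_σ²/(2ρ_σ) ≥ 0 and ρ_σ > 0, then the Bernstein-reconstructed fields ρ = Σ ρ_σ B_σ, m = Σ m_σ B_σ, E = Σ E_σ B_σ satisfy E(x) - m(x)²/(2ρ(x)) ≥ 0 at every point x of K. -/
/-! Cauchy–Schwarz applied to `r i = m i * w i`, `f i = m i ^ 2 / ρ i * w i`, `g i = ρ i * w i`
(for which `r i ^ 2 = f i * g i`) gives `(∑ m w) ^ 2 ≤ (∑ m² / ρ w) (∑ ρ w)`: the perspective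
function `(ρ, m) ↦ m² / ρ` is jointly convex. Hence `(ρ, m, E) ↦ E - m² / (2ρ)` is concave and
positively homogeneous, so it stays nonnegative under nonnegative combinations. -/

open Finset

section Perspective

variable {R ι : Type*} [Field R] [LinearOrder R] [IsStrictOrderedRing R]

theorem sq_sum_mul_div_sum_mul_le (s : Finset ι) {w m ρ : ι → R}
    (hw : ∀ i ∈ s, 0 ≤ w i) (hρ : ∀ i ∈ s, 0 < ρ i) :
    (∑ i ∈ s, m i * w i) ^ 2 / ∑ i ∈ s, ρ i * w i ≤ ∑ i ∈ s, m i ^ 2 / ρ i * w i := by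
  refine div_le_of_le_mul₀ (sum_nonneg fun i hi => mul_nonneg (hρ i hi).le (hw i hi))
    (sum_nonneg fun i hi => mul_nonneg (div_nonneg (sq_nonneg _) (hρ i hi).le) (hw i hi))
    (sum_sq_le_sum_mul_sum_of_sq_le_mul s
      (fun i hi => mul_nonneg (div_nonneg (sq_nonneg _) (hρ i hi).le) (hw i hi))
      (fun i hi => mul_nonneg (hρ i hi).le (hw i hi)) fun i hi => ?_)
  have := (hρ i hi).ne'
  field_simp
  rfl

end Perspective

noncomputable def internalEnergy (ρ m E : ℝ) : ℝ := E - m ^ 2 / (2 * ρ)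

theorem internalEnergy_sum_mul_nonneg {ι : Type*} (s : Finset ι) {w ρ m E : ι → ℝ}
    (hw : ∀ i ∈ s, 0 ≤ w i) (hρ : ∀ i ∈ s, 0 < ρ i)
    (he : ∀ i ∈ s, 0 ≤ internalEnergy (ρ i) (m i) (E i)) :
    0 ≤ internalEnergy (∑ i ∈ s, ρ i * w i) (∑ i ∈ s, m i * w i) (∑ i ∈ s, E i * w i) := by
  have hkinetic : ∀ i ∈ s, m i ^ 2 / ρ i * w i ≤ 2 * (E i * w i) := fun i hi =>
    calc m i ^ 2 / ρ i * w i = 2 * (m i ^ 2 / (2 * ρ i) * w i) := by ring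
      _ ≤ 2 * (E i * w i) := by
          gcongr
          · exact hw i hi
          · exact sub_nonneg.mp (he i hi)
  rw [internalEnergy, sub_nonneg]
  calc (∑ i ∈ s, m i * w i) ^ 2 / (2 * ∑ i ∈ s, ρ i * w i)
      = (∑ i ∈ s, m i * w i) ^ 2 / (∑ i ∈ s, ρ i * w i) / 2 := by rw [div_div, mul_comm]
    _ ≤ (∑ i ∈ s, m i ^ 2 / ρ i * w i) / 2 := by gcongr; exact sq_sum_mul_div_sum_mul_le s hw hρ
    _ ≤ ∑ i ∈ s, E i * w i := by
        rw [div_le_iff₀ two_pos, mul_comm, mul_sum]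
        exact sum_le_sum hkinetic

theorem reconstructed_internal_energy_nonneg_general
    {X : Type*} (K : Set X) {ι : Type*} [Fintype ι]
    (B : ι → X → ℝ)
    (hBnonneg : ∀ σ, ∀ x ∈ K, 0 ≤ B σ x)
    (ρc mc Ec : ι → ℝ)
    (hρ : ∀ σ, 0 < ρc σ)
    (he : ∀ σ, 0 ≤ Ec σ - (mc σ) ^ 2 / (2 * ρc σ)) :
    ∀ x ∈ K,
      0 ≤ (∑ σ, Ec σ * B σ x) -
        (∑ σ, mc σ * B σ x) ^ 2 / (2 * ∑ σ, ρc σ * B σ x) := fun x hx =>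
  internalEnergy_sum_mul_nonneg univ (fun σ _ => hBnonneg σ x hx) (fun σ _ => hρ σ) fun σ _ => he σ

/-- If the Bernstein coefficients satisfy `ρ_σ > 0` and `E_σ - m_σ²/(2ρ_σ) ≥ 0`,
then the Bernstein-reconstructed fields satisfy `E(x) - m(x)²/(2ρ(x)) ≥ 0` at
every point of `K`. -/
theorem reconstructed_internal_energy_nonneg
    {X : Type*} (K : Set X) {ι : Type*} [Fintype ι]
    (B : ι → X → ℝ)
    (hBnonneg : ∀ σ, ∀ x ∈ K, 0 ≤ B σ x)
    (hBsum : ∀ x ∈ K, ∑ σ, B σ x = 1)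
    (ρc mc Ec : ι → ℝ)
    (hρ : ∀ σ, 0 < ρc σ)
    (he : ∀ σ, 0 ≤ Ec σ - (mc σ) ^ 2 / (2 * ρc σ)) :
    ∀ x ∈ K,
      0 ≤ (∑ σ, Ec σ * B σ x) -
        (∑ σ, mc σ * B σ x) ^ 2 / (2 * ∑ σ, ρc σ * B σ x) :=
  reconstructed_internal_energy_nonneg_general K B hBnonneg ρc mc Ec hρ he
end

section
/- The deferred correction iteration is a contraction: if L¹ is coercive with constant α₁, L² has a unique root U*, and L² − L¹ is Lipschitz with constant α₂Δ, then the iteration defined by L¹(U^{(r+1)}) = L¹(U^{(r)}) − L²(U^{(r)}) satisfies ‖U^{(r+1)} − U*‖ ≤ (α₂Δ/α₁)‖U^{(r)} − U*‖, hence after R iterations the error is bounded by ν^R ‖U^{(0)} − U*‖ with ν = α₂Δ/α₁. -/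
/-! The residual identity `L¹(U^{r+1}) - L¹(U*) = (L² - L¹)(U*) - (L² - L¹)(U^r)`, which follows
from `L²(U*) = 0` and the iteration, turns coercivity of `L¹` and the Lipschitz bound on
`L² - L¹` into a one-step contraction with ratio `α₂Δ/α₁`; iterating it gives the geometric
bound. -/

theorem le_pow_mul_of_le_mul_of_nonneg {u : ℕ → ℝ} {c : ℝ} (hu : ∀ n, 0 ≤ u n)
    (h : ∀ n, u (n + 1) ≤ c * u n) (n : ℕ) : u n ≤ c ^ n * u 0 := by
  rcases le_or_gt 0 c with hc | hc
  · exact le_geom hc n fun k _ => h k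
  · -- a negative ratio forces the whole sequence to vanish
    have hzero : ∀ k, u k = 0 := fun k =>
      le_antisymm (by nlinarith [h k, hu k, hu (k + 1)]) (hu k)
    simp [hzero]

theorem norm_sub_root_le_of_deferredCorrection_step {E : Type*} [SeminormedAddCommGroup E]
    {L1 L2 : E → E} {α K : ℝ} (hα : 0 < α) (hcoer : ∀ U V, α * ‖U - V‖ ≤ ‖L1 U - L1 V‖)
    (hLip : ∀ U V, ‖(L2 U - L1 U) - (L2 V - L1 V)‖ ≤ K * ‖U - V‖)
    {Ustar : E} (hroot : L2 Ustar = 0) {U V : E} (hstep : L1 V = L1 U - L2 U) :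
    ‖V - Ustar‖ ≤ K / α * ‖U - Ustar‖ := by
  have hresidual : L1 V - L1 Ustar = (L2 Ustar - L1 Ustar) - (L2 U - L1 U) := by
    rw [hstep, hroot]; abel
  rw [div_mul_eq_mul_div, le_div_iff₀' hα]
  calc α * ‖V - Ustar‖ ≤ ‖L1 V - L1 Ustar‖ := hcoer _ _
    _ = ‖(L2 Ustar - L1 Ustar) - (L2 U - L1 U)‖ := by rw [hresidual]
    _ ≤ K * ‖Ustar - U‖ := hLip _ _
    _ = K * ‖U - Ustar‖ := by rw [norm_sub_rev]

theorem deferred_correction_contraction_general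
    {E : Type*} [NormedAddCommGroup E]
    (L1 L2 : E → E) (α₁ α₂ Δ : ℝ) (hα₁ : 0 < α₁)
    (hcoer : ∀ U V, α₁ * ‖U - V‖ ≤ ‖L1 U - L1 V‖)
    (Ustar : E) (hroot : L2 Ustar = 0)
    (hLip : ∀ U V, ‖(L2 U - L1 U) - (L2 V - L1 V)‖ ≤ α₂ * Δ * ‖U - V‖)
    (U : ℕ → E)
    (hiter : ∀ r, L1 (U (r + 1)) = L1 (U r) - L2 (U r)) :
    (∀ r, ‖U (r + 1) - Ustar‖ ≤ (α₂ * Δ / α₁) * ‖U r - Ustar‖) ∧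
    (∀ R, ‖U R - Ustar‖ ≤ (α₂ * Δ / α₁) ^ R * ‖U 0 - Ustar‖) := by
  have hcontract : ∀ r, ‖U (r + 1) - Ustar‖ ≤ (α₂ * Δ / α₁) * ‖U r - Ustar‖ := fun r =>
    norm_sub_root_le_of_deferredCorrection_step hα₁ hcoer hLip hroot (hiter r)
  exact ⟨hcontract, le_pow_mul_of_le_mul_of_nonneg (fun _ => norm_nonneg _) hcontract⟩

/-- Deferred correction contraction: if `L¹` is coercive with constant `α₁`,
`L²(U*) = 0`, and `L² − L¹` is Lipschitz with constant `α₂Δ`, then the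
iteration `L¹(U^{r+1}) = L¹(U^r) − L²(U^r)` contracts with ratio
`ν = α₂Δ/α₁`, and after `R` iterations the error is at most
`ν^R ‖U⁰ − U*‖`. -/
theorem deferred_correction_contraction
    {E : Type*} [NormedAddCommGroup E] [NormedSpace ℝ E]
    (L1 L2 : E → E) (α₁ α₂ Δ : ℝ) (hα₁ : 0 < α₁)
    (hcoer : ∀ U V, α₁ * ‖U - V‖ ≤ ‖L1 U - L1 V‖)
    (Ustar : E) (hroot : L2 Ustar = 0)
    (hLip : ∀ U V, ‖(L2 U - L1 U) - (L2 V - L1 V)‖ ≤ α₂ * Δ * ‖U - V‖)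
    (hν : α₂ * Δ / α₁ < 1)
    (U : ℕ → E)
    (hiter : ∀ r, L1 (U (r + 1)) = L1 (U r) - L2 (U r)) :
    (∀ r, ‖U (r + 1) - Ustar‖ ≤ (α₂ * Δ / α₁) * ‖U r - Ustar‖) ∧
    (∀ R, ‖U R - Ustar‖ ≤ (α₂ * Δ / α₁) ^ R * ‖U 0 - Ustar‖) :=
  deferred_correction_contraction_general L1 L2 α₁ α₂ Δ hα₁ hcoer Ustar hroot hLip U hiter
end
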